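/- arXiv:1401.7860 — 2 statements merged into one kernel-verified Lean document; each statement's English description precedes it below -/
import Mathlib

section
/- Suppose L is generic, satisfies the triangle inequality, and s₂ + s₃ < (l_1 + … + l_n)/2. Then every vertex (I, J, K) of Γ(L) is joined to its mirror image (J, I, K) by a path in Γ(L) of length at most 6. -/
open Finset

/-- `I ⊆ [n]` is *short*: the sum of its lengths is less than that of its complement. -/
def ShortSet {n : ℕ} (L : Fin n → ℝ) (I : Finset (Fin n)) : Prop :=
  ∑ i ∈ I, L i < ∑ i ∈ Iᶜ, L i

/-- `I ⊆ [n]` is *long*: the sum of its lengths is greater than that of its complement. -/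
def LongSet {n : ℕ} (L : Fin n → ℝ) (I : Finset (Fin n)) : Prop :=
  ∑ i ∈ Iᶜ, L i < ∑ i ∈ I, L i

/-- The length vector `L` is *generic*. -/
def GenericVec {n : ℕ} (L : Fin n → ℝ) : Prop :=
  ∀ I : Finset (Fin n), ∑ i ∈ I, L i ≠ ∑ i ∈ Iᶜ, L i

/-- `L` satisfies the triangle inequality: every singleton is short. -/
def TriangleIneq {n : ℕ} (L : Fin n → ℝ) : Prop :=
  ∀ i : Fin n, ShortSet L {i}

/-- Ordered triples of subsets of `[n]`. -/
abbrev LTriple (n : ℕ) := Finset (Fin n) × Finset (Fin n) × Finset (Fin n)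

/-- An ordered triple `(I, J, K)` representing a vertex of `Γ(L)`: three pairwise
disjoint nonempty short sets whose union is `[n]`. -/
def IsVertex {n : ℕ} (L : Fin n → ℝ) (V : LTriple n) : Prop :=
  V.1.Nonempty ∧ V.2.1.Nonempty ∧ V.2.2.Nonempty ∧
  ShortSet L V.1 ∧ ShortSet L V.2.1 ∧ ShortSet L V.2.2 ∧
  Disjoint V.1 V.2.1 ∧ Disjoint V.1 V.2.2 ∧ Disjoint V.2.1 V.2.2 ∧
  V.1 ∪ V.2.1 ∪ V.2.2 = Finset.univ

/-- Cyclic rotation of an ordered triple. -/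
def rotT {n : ℕ} (V : LTriple n) : LTriple n := (V.2.1, V.2.2, V.1)

/-- Two ordered triples represent the same cyclically ordered partition
(`(I,J,K)`, `(J,K,I)` and `(K,I,J)` are identified). -/
def CyclEq {n : ℕ} (V W : LTriple n) : Prop :=
  W = V ∨ W = rotT V ∨ W = rotT (rotT V)

/-- The mirror image of the vertex `(I, J, K)` is the vertex `(J, I, K)`. -/
def mirrorT {n : ℕ} (V : LTriple n) : LTriple n := (V.2.1, V.1, V.2.2)

/-- The elementary move on representatives: shift a nonempty proper subset
`S ⊊ I` to the second part, provided `J ∪ S` stays short. -/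
def MoveStep {n : ℕ} (L : Fin n → ℝ) (V W : LTriple n) : Prop :=
  ∃ S : Finset (Fin n), S.Nonempty ∧ S ⊂ V.1 ∧ ShortSet L (V.2.1 ∪ S) ∧
    W = (V.1 \ S, V.2.1 ∪ S, V.2.2)

/-- Adjacency in `Γ(L)`: one of the two vertices has a representative from which an
elementary move leads to a representative of the other. -/
def GammaAdj {n : ℕ} (L : Fin n → ℝ) (V W : LTriple n) : Prop :=
  (∃ V' W' : LTriple n, CyclEq V V' ∧ MoveStep L V' W' ∧ CyclEq W W') ∨
  (∃ W' V' : LTriple n, CyclEq W W' ∧ MoveStep L W' V' ∧ CyclEq V V')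

/-- There is a path of length `m` (i.e. with `m` consecutive edges) in `Γ(L)`
from the vertex `V` to the vertex `W`. -/
def GammaPath {n : ℕ} (L : Fin n → ℝ) (m : ℕ) (V W : LTriple n) : Prop :=
  ∃ f : ℕ → LTriple n, CyclEq V (f 0) ∧ CyclEq W (f m) ∧
    (∀ i ≤ m, IsVertex L (f i)) ∧ ∀ i < m, GammaAdj L (f i) (f (i + 1))

/-- The list of lengths sorted in nonincreasing order. -/
noncomputable def sortedDesc {n : ℕ} (L : Fin n → ℝ) : List ℝ :=
  List.insertionSort (· ≥ ·) (List.ofFn L)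

/-- The second largest length (with multiplicity). -/
noncomputable def s2 {n : ℕ} (L : Fin n → ℝ) : ℝ := (sortedDesc L).getD 1 0

/-- The third largest length (with multiplicity). -/
noncomputable def s3 {n : ℕ} (L : Fin n → ℝ) : ℝ := (sortedDesc L).getD 2 0

/-!
Let `p` be an index of maximal length; the hypothesis on `s₂ + s₃` guarantees that every pair
avoiding `p` is short. Since `(J, I, K)`, `(I, K, J)` and `(K, J, I)` are the same vertex, it
suffices to exchange two parts `X`, `Y` of a vertex while the third part `Z` stays in place. An
element `e ∈ X` with `Y + e` short and `Z + e` long escorts such an exchange in three moves, and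
parking a suitable piece of `X` in `Z` beforehand (two more moves) can make `Z + e` long. With `e`
the heaviest element of `X` this works unless `e` fits into neither `Y` nor `Z`. If every part
contains such an element, two of them avoid `p` and hence form a short pair, and again an
exchange in five moves exists.
-/

section Weights

variable {n : ℕ} {L : Fin n → ℝ} {I J : Finset (Fin n)}

lemma shortSet_iff : ShortSet L I ↔ 2 * ∑ i ∈ I, L i < ∑ i, L i := by
  have := sum_compl_add_sum I L
  unfold ShortSet
  constructor <;> intro h <;> linarith

lemma longSet_iff : LongSet L I ↔ ∑ i, L i < 2 * ∑ i ∈ I, L i := by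
  have := sum_compl_add_sum I L
  unfold LongSet
  constructor <;> intro h <;> linarith

lemma GenericVec.longSet_of_not_shortSet (hgen : GenericVec L) (h : ¬ ShortSet L I) :
    LongSet L I :=
  lt_of_le_of_ne (not_lt.mp h) (hgen I).symm

lemma GenericVec.shortSet_of_le (hgen : GenericVec L) (h : 2 * ∑ i ∈ I, L i ≤ ∑ i, L i) :
    ShortSet L I := by
  by_contra hI
  linarith [longSet_iff.mp (hgen.longSet_of_not_shortSet hI)]

lemma ShortSet.mono (hpos : ∀ i, 0 < L i) (h : ShortSet L I) (hJI : J ⊆ I) : ShortSet L J := by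
  rw [shortSet_iff] at h ⊢
  linarith [sum_le_sum_of_subset_of_nonneg hJI fun i _ _ => (hpos i).le]

end Weights

lemma exists_subset_lt_sum_le {ι : Type*} {f : ι → ℝ} {lo w : ℝ} (hlo : 0 ≤ lo) :
    ∀ R : Finset ι, (∀ x ∈ R, f x ≤ w) → lo < ∑ x ∈ R, f x →
      ∃ T ⊆ R, lo < ∑ x ∈ T, f x ∧ ∑ x ∈ T, f x ≤ lo + w := by
  intro R
  induction R using Finset.cons_induction with
  | empty => intro _ h; simp only [sum_empty] at h; linarith
  | cons a R ha ih =>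
    intro hw hR
    rw [sum_cons] at hR
    by_cases hlt : lo < ∑ x ∈ R, f x
    · obtain ⟨T, hTR, hT⟩ := ih (fun x hx => hw x (mem_cons_of_mem hx)) hlt
      exact ⟨T, hTR.trans (subset_cons ha), hT⟩
    · refine ⟨cons a R ha, Subset.refl _, by rwa [sum_cons], ?_⟩
      rw [sum_cons]
      linarith [hw a (mem_cons_self a R)]

section Vertices

variable {n : ℕ} {L : Fin n → ℝ} {A B C A' B' : Finset (Fin n)} {V W : LTriple n}

lemma IsVertex.mem (h : IsVertex L (A, B, C)) (i : Fin n) :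
    (i ∈ A ∨ i ∈ B ∨ i ∈ C) ∧ (i ∈ A → i ∉ B ∧ i ∉ C) ∧ (i ∈ B → i ∉ C) := by
  obtain ⟨-, -, -, -, -, -, hAB, hAC, hBC, hcover⟩ := h
  have hi : i ∈ A ∪ B ∪ C := hcover ▸ mem_univ i
  simp only [mem_union] at hi
  exact ⟨by tauto, fun hA => ⟨disjoint_left.mp hAB hA, disjoint_left.mp hAC hA⟩,
    fun hB => disjoint_left.mp hBC hB⟩

lemma IsVertex.nonempty (h : IsVertex L (A, B, C)) : A.Nonempty ∧ B.Nonempty ∧ C.Nonempty :=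
  ⟨h.1, h.2.1, h.2.2.1⟩

lemma IsVertex.shortSet (h : IsVertex L (A, B, C)) :
    ShortSet L A ∧ ShortSet L B ∧ ShortSet L C :=
  ⟨h.2.2.2.1, h.2.2.2.2.1, h.2.2.2.2.2.1⟩

lemma isVertex_of_mem (hA : A.Nonempty) (hB : B.Nonempty) (hC : C.Nonempty)
    (hAs : ShortSet L A) (hBs : ShortSet L B) (hCs : ShortSet L C)
    (hmem : ∀ i, (i ∈ A ∨ i ∈ B ∨ i ∈ C) ∧ (i ∈ A → i ∉ B ∧ i ∉ C) ∧ (i ∈ B → i ∉ C)) :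
    IsVertex L (A, B, C) := by
  refine ⟨hA, hB, hC, hAs, hBs, hCs, disjoint_left.mpr fun i hi => ((hmem i).2.1 hi).1,
    disjoint_left.mpr fun i hi => ((hmem i).2.1 hi).2,
    disjoint_left.mpr fun i hi => (hmem i).2.2 hi, ?_⟩
  ext i
  simpa only [mem_union, mem_univ, iff_true, or_assoc] using (hmem i).1

lemma IsVertex.rot (h : IsVertex L V) : IsVertex L (rotT V) := by
  obtain ⟨A, B, C⟩ := V
  have hmem := h.mem
  obtain ⟨hA, hB, hC, hAs, hBs, hCs, -⟩ := h
  exact isVertex_of_mem hB hC hA hBs hCs hAs fun i => by have := hmem i; tauto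

lemma IsVertex.mirror (h : IsVertex L V) : IsVertex L (mirrorT V) := by
  obtain ⟨A, B, C⟩ := V
  have hmem := h.mem
  obtain ⟨hA, hB, hC, hAs, hBs, hCs, -⟩ := h
  exact isVertex_of_mem hB hA hC hBs hAs hCs fun i => by have := hmem i; tauto

lemma IsVertex.sum_add_sum_add_sum (h : IsVertex L (A, B, C)) :
    ∑ i ∈ A, L i + ∑ i ∈ B, L i + ∑ i ∈ C, L i = ∑ i, L i := by
  obtain ⟨-, -, -, -, -, -, hAB, hAC, hBC, hcover⟩ := h
  rw [← sum_union hAB, ← sum_union (disjoint_union_left.mpr ⟨hAC, hBC⟩), hcover]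

lemma IsVertex.park (hpos : ∀ i, 0 < L i) (h : IsVertex L (A, B, C)) {T : Finset (Fin n)}
    (hTA : T ⊆ A) (hAT : (A \ T).Nonempty) (hCT : ShortSet L (C ∪ T)) :
    IsVertex L (A \ T, B, C ∪ T) :=
  isVertex_of_mem hAT h.nonempty.2.1 (h.nonempty.2.2.mono subset_union_left)
    (h.shortSet.1.mono hpos sdiff_subset) h.shortSet.2.1 hCT
    fun i => by have := h.mem i; have := @hTA i; grind

lemma CyclEq.refl (V : LTriple n) : CyclEq V V := Or.inl rfl

lemma cyclEq_rotT (V : LTriple n) : CyclEq V (rotT V) := Or.inr (Or.inl rfl)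

lemma CyclEq.symm (h : CyclEq V W) : CyclEq W V := by
  rcases h with rfl | rfl | rfl
  exacts [.refl _, Or.inr (Or.inr rfl), Or.inr (Or.inl rfl)]

lemma CyclEq.trans {U : LTriple n} (h : CyclEq V W) (h' : CyclEq W U) : CyclEq V U := by
  rcases h with rfl | rfl | rfl <;> rcases h' with rfl | rfl | rfl <;> simp [CyclEq, rotT]

lemma GammaAdj.symm (h : GammaAdj L V W) : GammaAdj L W V := Or.symm h

lemma GammaAdj.congr {V' W' : LTriple n} (hV : CyclEq V V') (hW : CyclEq W W')
    (h : GammaAdj L V' W') : GammaAdj L V W := by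
  rcases h with ⟨V₀, W₀, hV₀, hmove, hW₀⟩ | ⟨W₀, V₀, hW₀, hmove, hV₀⟩
  · exact Or.inl ⟨V₀, W₀, hV.trans hV₀, hmove, hW.trans hW₀⟩
  · exact Or.inr ⟨W₀, V₀, hW.trans hW₀, hmove, hV.trans hV₀⟩

lemma gammaAdj_rotT_iff : GammaAdj L (rotT V) (rotT W) ↔ GammaAdj L V W :=
  ⟨.congr (cyclEq_rotT V) (cyclEq_rotT W),
    .congr (cyclEq_rotT V).symm (cyclEq_rotT W).symm⟩

lemma gammaAdj_of_fst_ssubset (hV : IsVertex L (A, B, C)) (hW : IsVertex L (A', B', C))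
    (h : A' ⊂ A) : GammaAdj L (A, B, C) (A', B', C) := by
  have hsub : A' ⊆ A := h.subset
  obtain ⟨x, hxA, hxA'⟩ := (ssubset_iff_of_subset hsub).mp h
  obtain ⟨y, hyA'⟩ := hW.1
  have hB' : B ∪ (A \ A') = B' := by
    ext i
    have := hV.mem i
    have := hW.mem i
    have := @hsub i
    grind
  have hmove : MoveStep L (A, B, C) (A', B', C) := by
    refine ⟨A \ A', ⟨x, mem_sdiff.mpr ⟨hxA, hxA'⟩⟩, ?_, ?_, ?_⟩
    · exact (ssubset_iff_of_subset sdiff_subset).mpr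
        ⟨y, hsub hyA', fun hy => (mem_sdiff.mp hy).2 hyA'⟩
    · rw [hB']
      exact hW.2.2.2.2.1
    · rw [Finset.sdiff_sdiff_eq_self hsub, hB']
  exact Or.inl ⟨_, _, .refl _, hmove, .refl _⟩

lemma gammaAdj_of_snd_ssubset (hV : IsVertex L (A, B, C)) (hW : IsVertex L (A', B', C))
    (h : B' ⊂ B) : GammaAdj L (A, B, C) (A', B', C) := by
  have hsub : B' ⊆ B := h.subset
  obtain ⟨x, hxB, hxB'⟩ := (ssubset_iff_of_subset hsub).mp h
  have hA : A ⊂ A' := by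
    refine (ssubset_iff_of_subset fun i hi => ?_).mpr ⟨x, ?_, ?_⟩
    · have := hV.mem i
      have := hW.mem i
      have := @hsub i
      tauto
    · have := hV.mem x
      have := hW.mem x
      tauto
    · exact fun hxA => ((hV.mem x).2.1 hxA).1 hxB
  exact (gammaAdj_of_fst_ssubset hW hV hA).symm

lemma gammaPath_zero (hV : IsVertex L V) : GammaPath L 0 V V :=
  ⟨fun _ => V, .refl _, .refl _, fun _ _ => hV, fun _ h => absurd h (Nat.not_lt_zero _)⟩

lemma GammaPath.cons {U : LTriple n} {m : ℕ} (hV : IsVertex L V) (hVW : GammaAdj L V W)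
    (h : GammaPath L m W U) : GammaPath L (m + 1) V U := by
  obtain ⟨f, h0, hm, hvert, hadj⟩ := h
  refine ⟨fun i => Nat.casesOn i V f, .refl _, hm, fun i hi => ?_, fun i hi => ?_⟩
  · cases i with
    | zero => exact hV
    | succ i => exact hvert i (by omega)
  · cases i with
    | zero => exact hVW.congr (.refl _) h0.symm
    | succ i => exact hadj i (by omega)

lemma GammaPath.symm {m : ℕ} (h : GammaPath L m V W) : GammaPath L m W V := by
  obtain ⟨f, h0, hm, hvert, hadj⟩ := h
  refine ⟨fun i => f (m - i), by simpa using hm, by simpa using h0,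
    fun i _ => hvert (m - i) (by omega), fun i hi => ?_⟩
  have := hadj (m - (i + 1)) (by omega)
  rw [show m - (i + 1) + 1 = m - i by omega] at this
  exact this.symm

lemma GammaPath.congr {V' W' : LTriple n} {m : ℕ} (hV : CyclEq V V') (hW : CyclEq W W')
    (h : GammaPath L m V' W') : GammaPath L m V W := by
  obtain ⟨f, h0, hm, hvert, hadj⟩ := h
  exact ⟨f, hV.trans h0, hW.trans hm, hvert, hadj⟩

def ReachesMirrorWithin (L : Fin n → ℝ) (k : ℕ) (V : LTriple n) : Prop :=
  ∃ m ≤ k, GammaPath L m V (mirrorT V)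

lemma ReachesMirrorWithin.mirror {k : ℕ} {V : LTriple n} (h : ReachesMirrorWithin L k V) :
    ReachesMirrorWithin L k (mirrorT V) := by
  obtain ⟨m, hm, h⟩ := h
  exact ⟨m, hm, h.symm⟩

lemma reachesMirrorWithin_rotT_iff {k : ℕ} {V : LTriple n} :
    ReachesMirrorWithin L k (rotT V) ↔ ReachesMirrorWithin L k V := by
  have hmirror : CyclEq (mirrorT V) (mirrorT (rotT V)) := Or.inr (Or.inr rfl)
  constructor <;> rintro ⟨m, hm, h⟩
  · exact ⟨m, hm, h.congr (cyclEq_rotT V) hmirror⟩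
  · exact ⟨m, hm, h.congr (cyclEq_rotT V).symm hmirror.symm⟩

end Vertices

lemma le_getD_of_lt_countP {α : Type*} [LinearOrder α] {v d : α} :
    ∀ {l : List α} {k : ℕ}, l.Pairwise (· ≥ ·) → k < l.countP (fun a => decide (v ≤ a)) →
      v ≤ l.getD k d
  | [], _, _, hk => by simp at hk
  | a :: t, k, hl, hk => by
    obtain ⟨ha, ht⟩ := List.pairwise_cons.mp hl
    by_cases hva : v ≤ a
    · rw [List.countP_cons_of_pos (by simpa using hva)] at hk
      cases k with
      | zero => simpa using hva
      | succ k => simpa using le_getD_of_lt_countP ht (by omega)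
    · have : t.countP (fun a => decide (v ≤ a)) = 0 :=
        List.countP_eq_zero.mpr fun b hb hvb => hva ((of_decide_eq_true hvb).trans (ha b hb))
      rw [List.countP_cons_of_neg (by simpa using hva), this] at hk
      omega

section Sorted

variable {n : ℕ} {L : Fin n → ℝ}

lemma le_getD_sortedDesc {v : ℝ} {k : ℕ} {s : Finset (Fin n)} (hk : k < #s)
    (hs : ∀ i ∈ s, v ≤ L i) : v ≤ (sortedDesc L).getD k 0 := by
  refine le_getD_of_lt_countP (List.pairwise_insertionSort _ _) ?_
  have hcount : (List.ofFn L).countP (fun a => decide (v ≤ a)) = #{i | v ≤ L i} := by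
    rw [List.ofFn_eq_map, List.countP_map, List.countP_eq_length_filter, card_def, filter_val,
      Fin.univ_def]
    simp [Function.comp_def]
  rw [sortedDesc, (List.perm_insertionSort _ _).countP_eq, hcount]
  exact hk.trans_le (card_le_card fun i hi => mem_filter.mpr ⟨mem_univ i, hs i hi⟩)

lemma add_le_s2_add_s3 {p x y : Fin n} (hp : ∀ i, L i ≤ L p) (hxy : x ≠ y) (hxp : x ≠ p)
    (hyp : y ≠ p) : L x + L y ≤ s2 L + s3 L := by
  wlog hyx : L y ≤ L x generalizing x y
  · linarith [this hxy.symm hyp hxp (le_of_not_ge hyx)]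
  have h2 : L x ≤ s2 L := le_getD_sortedDesc (s := {p, x}) (by rw [card_pair hxp.symm]; omega)
    (by simp [hp x])
  have h3 : L y ≤ s3 L := le_getD_sortedDesc (s := {p, x, y})
    (by rw [card_insert_of_notMem (by simp [hxp.symm, hyp.symm]), card_pair hxy]; omega)
    (by simp [hp y, hyx])
  linarith

end Sorted

section Schemes

variable {n : ℕ} {L : Fin n → ℝ} {X Y Z : Finset (Fin n)} {e : Fin n}

/-- `e` escorts the exchange: first `X - e` moves to `Y`, then `Y` moves to `{e}`, and finally
`e` joins `X - e`. -/
lemma gammaPath_mirror_of_escort (hpos : ∀ i, 0 < L i) (hV : IsVertex L (X, Y, Z)) (he : e ∈ X)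
    (hXe : (X.erase e).Nonempty) (hYe : ShortSet L (insert e Y))
    (hZe : LongSet L (insert e Z)) : GammaPath L 3 (X, Y, Z) (Y, X, Z) := by
  obtain ⟨-, hYn, hZn⟩ := hV.nonempty
  obtain ⟨hXs, -, hZs⟩ := hV.shortSet
  have hsum := hV.sum_add_sum_add_sum
  have heY : e ∉ Y := ((hV.mem e).2.1 he).1
  have heZ : e ∉ Z := ((hV.mem e).2.1 he).2
  have hYX : Disjoint Y (X.erase e) :=
    disjoint_left.mpr fun i hiY hiX => ((hV.mem i).2.1 (mem_of_mem_erase hiX)).1 hiY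
  rw [longSet_iff, sum_insert heZ] at hZe
  have hV₁ : IsVertex L ({e}, Y ∪ X.erase e, Z) := by
    refine isVertex_of_mem (singleton_nonempty e) (hYn.mono subset_union_left) hZn
      (hXs.mono hpos (singleton_subset_iff.mpr he)) ?_ hZs fun i => ?_
    · rw [shortSet_iff, sum_union hYX, sum_erase_eq_sub he]
      linarith
    · have := hV.mem i
      grind
  have hV₂ : IsVertex L (insert e Y, X.erase e, Z) :=
    isVertex_of_mem (insert_nonempty e Y) hXe hZn hYe (hXs.mono hpos (erase_subset e X)) hZs
      fun i => by have := hV.mem i; grind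
  obtain ⟨x, hx⟩ := hXe
  obtain ⟨y, hy⟩ := hYn
  have h₀₁ := gammaAdj_of_fst_ssubset hV hV₁ <| (ssubset_iff_of_subset
    (singleton_subset_iff.mpr he)).mpr ⟨x, mem_of_mem_erase hx, by simpa using ne_of_mem_erase hx⟩
  have h₁₂ := gammaAdj_of_snd_ssubset hV₁ hV₂ <| (ssubset_iff_of_subset subset_union_right).mpr
    ⟨y, mem_union_left _ hy, disjoint_left.mp hYX hy⟩
  have h₂₃ := gammaAdj_of_fst_ssubset hV₂ hV.mirror (ssubset_insert heY)
  exact .cons hV h₀₁ (.cons hV₁ h₁₂ (.cons hV₂ h₂₃ (gammaPath_zero hV.mirror)))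

/-- `X \ X'` is parked in `Z` during the exchange and brought back afterwards. -/
lemma gammaPath_mirror_of_park {X' Z' : Finset (Fin n)} {m : ℕ} (hV : IsVertex L (X, Y, Z))
    (hW : IsVertex L (X', Y, Z')) (hX : X' ⊂ X) (h : GammaPath L m (X', Y, Z') (Y, X', Z')) :
    GammaPath L (m + 2) (X, Y, Z) (Y, X, Z) := by
  have hV' : IsVertex L (Z, X, Y) := hV.rot.rot
  have hW' : IsVertex L (Z', X', Y) := hW.rot.rot
  have hpark : GammaAdj L (X, Y, Z) (X', Y, Z') :=
    gammaAdj_rotT_iff.mpr (gammaAdj_of_snd_ssubset hV' hW' hX)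
  have hunpark : GammaAdj L (Y, X', Z') (Y, X, Z) :=
    gammaAdj_rotT_iff.mp (gammaAdj_of_fst_ssubset (C := Y) hV.mirror.rot hW.mirror.rot hX).symm
  exact .cons hV hpark (.symm (.cons hV.mirror hunpark.symm h.symm))

/-- If the heaviest element `e` of `X` still fits into `Y`, then either it escorts the exchange of
`X` and `Y` directly, or a part of `X - e` first has to be parked in `Z` so that `Z` can no longer
take `e`. -/
lemma reachesMirrorWithin_of_isMax (hpos : ∀ i, 0 < L i) (hgen : GenericVec L)
    (hV : IsVertex L (X, Y, Z)) (he : e ∈ X) (hmax : ∀ x ∈ X, L x ≤ L e)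
    (hYe : ShortSet L (insert e Y)) : ReachesMirrorWithin L 5 (X, Y, Z) := by
  obtain ⟨-, hYs, hZs⟩ := hV.shortSet
  have hsum := hV.sum_add_sum_add_sum
  have heY : e ∉ Y := ((hV.mem e).2.1 he).1
  have heZ : e ∉ Z := ((hV.mem e).2.1 he).2
  have hYe' := shortSet_iff.mp hYe
  rw [sum_insert heY] at hYe'
  have hY := shortSet_iff.mp hYs
  have hZ := shortSet_iff.mp hZs
  have hXe : (X.erase e).Nonempty := by
    refine nonempty_of_sum_ne_zero (f := L) (ne_of_gt ?_)
    rw [sum_erase_eq_sub he]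
    linarith
  by_cases hZe : ShortSet L (insert e Z)
  swap
  · exact ⟨3, by norm_num,
      gammaPath_mirror_of_escort hpos hV he hXe hYe (hgen.longSet_of_not_shortSet hZe)⟩
  rw [shortSet_iff, sum_insert heZ] at hZe
  obtain ⟨T, hTXe, hlo, hhi⟩ := exists_subset_lt_sum_le
    (lo := (∑ i, L i) / 2 - ∑ i ∈ Z, L i - L e) (by linarith) (X.erase e)
    (fun x hx => hmax x (mem_of_mem_erase hx)) (by rw [sum_erase_eq_sub he]; linarith)
  have hTX : T ⊆ X := hTXe.trans (erase_subset e X)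
  have heT : e ∉ T := fun h => by simpa using hTXe h
  have hT : T.Nonempty := nonempty_of_sum_ne_zero (f := L) (by linarith)
  have hZT : Disjoint Z T :=
    disjoint_left.mpr fun i hiZ hiT => ((hV.mem i).2.1 (hTX hiT)).2 hiZ
  have hW := hV.park hpos hTX ⟨e, mem_sdiff.mpr ⟨he, heT⟩⟩ <| hgen.shortSet_of_le <| by
    rw [sum_union hZT]
    linarith
  have hescort := gammaPath_mirror_of_escort hpos hW (mem_sdiff.mpr ⟨he, heT⟩) ?_ hYe ?_
  · exact ⟨5, le_rfl, gammaPath_mirror_of_park hV hW (sdiff_ssubset hTX hT) hescort⟩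
  · refine nonempty_of_sum_ne_zero (f := L) (ne_of_gt ?_)
    rw [sum_erase_eq_sub (mem_sdiff.mpr ⟨he, heT⟩), sum_sdiff_eq_sub hTX]
    linarith
  · rw [longSet_iff, sum_insert (by simp [heZ, heT]), sum_union hZT]
    linarith

lemma exists_large_or_reachesMirrorWithin (hpos : ∀ i, 0 < L i) (hgen : GenericVec L)
    (hV : IsVertex L (X, Y, Z)) :
    (∃ g ∈ X, LongSet L (insert g Y) ∧ LongSet L (insert g Z)) ∨
      ReachesMirrorWithin L 5 (X, Y, Z) := by
  obtain ⟨e, he, hmax⟩ := exists_max_image X L hV.nonempty.1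
  by_cases hYe : ShortSet L (insert e Y)
  · exact .inr (reachesMirrorWithin_of_isMax hpos hgen hV he hmax hYe)
  by_cases hZe : ShortSet L (insert e Z)
  · have hV' : IsVertex L (X, Z, Y) := hV.rot.rot.mirror
    exact .inr (reachesMirrorWithin_rotT_iff.mpr
      (reachesMirrorWithin_of_isMax hpos hgen hV' he hmax hZe).mirror)
  exact .inl ⟨e, he, hgen.longSet_of_not_shortSet hYe, hgen.longSet_of_not_shortSet hZe⟩

/-- Park `X - g` in `Z`, then let `e` escort the exchange of `Y` and `{g}`. -/
lemma reachesMirrorWithin_of_large_pair (hpos : ∀ i, 0 < L i) (hV : IsVertex L (X, Y, Z))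
    {g : Fin n} (hg : g ∈ X) (he : e ∈ Y) (hYg : LongSet L (insert g Y))
    (hXe : LongSet L (insert e X)) (hZe : LongSet L (insert e Z)) (hge : ShortSet L {g, e}) :
    ReachesMirrorWithin L 5 (X, Y, Z) := by
  have hsum := hV.sum_add_sum_add_sum
  have hgY : g ∉ Y := ((hV.mem g).2.1 hg).1
  have heX : e ∉ X := fun h => ((hV.mem e).2.1 h).1 he
  have heZ : e ∉ Z := (hV.mem e).2.2 he
  have hge' : g ≠ e := fun h => heX (h ▸ hg)
  rw [longSet_iff, sum_insert hgY] at hYg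
  rw [longSet_iff, sum_insert heX] at hXe
  rw [longSet_iff, sum_insert heZ] at hZe
  have hge'' := shortSet_iff.mp hge
  rw [sum_pair hge'] at hge''
  have hXg : (X.erase g).Nonempty := by
    refine nonempty_of_sum_ne_zero (f := L) (ne_of_gt ?_)
    rw [sum_erase_eq_sub hg]
    linarith
  have hYe : (Y.erase e).Nonempty := by
    refine nonempty_of_sum_ne_zero (f := L) (ne_of_gt ?_)
    rw [sum_erase_eq_sub he]
    linarith
  have hZX : Disjoint Z (X.erase g) :=
    disjoint_left.mpr fun i hiZ hiX => ((hV.mem i).2.1 (mem_of_mem_erase hiX)).2 hiZ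
  have hW := hV.park hpos (erase_subset g X) (by rw [sdiff_erase_self hg]; simp) <| by
    rw [shortSet_iff, sum_union hZX, sum_erase_eq_sub hg]
    linarith
  have hgX := sdiff_ssubset (erase_subset g X) hXg
  rw [sdiff_erase_self hg] at hW hgX
  have hescort := gammaPath_mirror_of_escort hpos hW.mirror he hYe (by rwa [pair_comm]) ?_
  · exact ⟨5, le_rfl, gammaPath_mirror_of_park hV hW hgX hescort.symm⟩
  · rw [longSet_iff, sum_insert (by simp [heZ, heX]), sum_union hZX, sum_erase_eq_sub hg]
    linarith

/-- Unless some exchange is already possible, every part contains an element too large for both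
other parts; two of these three elements avoid `p`, so they form a short pair. -/
lemma reachesMirrorWithin_five_of_shortSet_pair (hpos : ∀ i, 0 < L i) (hgen : GenericVec L)
    {p : Fin n} (hpair : ∀ x y, x ≠ y → x ≠ p → y ≠ p → ShortSet L {x, y}) {V : LTriple n}
    (hV : IsVertex L V) : ReachesMirrorWithin L 5 V := by
  obtain ⟨A, B, C⟩ := V
  have hV₁ : IsVertex L (B, C, A) := hV.rot
  have hV₂ : IsVertex L (C, A, B) := hV.rot.rot
  rcases exists_large_or_reachesMirrorWithin hpos hgen hV with ⟨a, ha, hBa, hCa⟩ | h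
  swap; · exact h
  rcases exists_large_or_reachesMirrorWithin hpos hgen hV₁ with ⟨b, hb, hCb, hAb⟩ | h
  swap; · exact reachesMirrorWithin_rotT_iff.mp h
  rcases exists_large_or_reachesMirrorWithin hpos hgen hV₂ with ⟨c, hc, hAc, hBc⟩ | h
  swap; · exact reachesMirrorWithin_rotT_iff.mp (reachesMirrorWithin_rotT_iff.mp h)
  have hab : a ≠ b := fun h => ((hV.mem a).2.1 ha).1 (h ▸ hb)
  have hbc : b ≠ c := fun h => (hV.mem b).2.2 hb (h ▸ hc)
  have hca : c ≠ a := fun h => ((hV.mem a).2.1 ha).2 (h ▸ hc)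
  by_cases hap : a = p
  · have hbc' := hpair b c hbc (fun h => hab (hap.trans h.symm)) (fun h => hca (h.trans hap.symm))
    exact reachesMirrorWithin_rotT_iff.mp
      (reachesMirrorWithin_of_large_pair hpos hV₁ hb hc hCb hBc hAc hbc')
  by_cases hbp : b = p
  · have hca' := hpair c a hca (fun h => hbc (hbp.trans h.symm)) hap
    exact reachesMirrorWithin_rotT_iff.mp (reachesMirrorWithin_rotT_iff.mp
      (reachesMirrorWithin_of_large_pair hpos hV₂ hc ha hAc hCa hBa hca'))
  exact reachesMirrorWithin_of_large_pair hpos hV ha hb hBa hAb hCb (hpair a b hab hap hbp)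

end Schemes

theorem mirror_at_most_6_general (n : ℕ) (L : Fin n → ℝ)
    (hpos : ∀ i, 0 < L i) (hgen : GenericVec L)
    (hs : s2 L + s3 L < (∑ i, L i) / 2) :
    ∀ V : LTriple n, IsVertex L V → ∃ m ≤ 6, GammaPath L m V (mirrorT V) := by
  intro V hV
  obtain ⟨p, -, hp⟩ := exists_max_image univ L (hV.1.mono (subset_univ _))
  have hpair : ∀ x y, x ≠ y → x ≠ p → y ≠ p → ShortSet L {x, y} := fun x y hxy hxp hyp => by
    rw [shortSet_iff, sum_pair hxy]
    linarith [add_le_s2_add_s3 (fun i => hp i (mem_univ i)) hxy hxp hyp]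
  obtain ⟨m, hm, h⟩ := reachesMirrorWithin_five_of_shortSet_pair hpos hgen hpair hV
  exact ⟨m, by omega, h⟩

/-- If `L` is generic, satisfies the triangle inequality, and
`s₂ + s₃ < (l₁ + ⋯ + lₙ)/2`, then every vertex `(I,J,K)` of `Γ(L)` is joined to its
mirror image `(J,I,K)` by a path of length at most 6. -/
theorem mirror_at_most_6 (n : ℕ) (hn : 3 ≤ n) (L : Fin n → ℝ)
    (hpos : ∀ i, 0 < L i) (hgen : GenericVec L) (htri : TriangleIneq L)
    (hs : s2 L + s3 L < (∑ i, L i) / 2) :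
    ∀ V : LTriple n, IsVertex L V → ∃ m ≤ 6, GammaPath L m V (mirrorT V) :=
  mirror_at_most_6_general n L hpos hgen hs
end

section
/- If L is an n-bow, then the number of vertices of Γ(L) equals 2^{n−1} − 2. -/
open Finset

open scoped Classical in
/-- The finset of ordered triples representing vertices of `Γ(L)`; the number of
vertices of `Γ(L)` is one third of its cardinality. -/
noncomputable def vertexTriples {n : ℕ} (L : Fin n → ℝ) : Finset (LTriple n) :=
  Finset.univ.filter (fun V => IsVertex L V)

/-!
In an `n`-bow the element `n` is so heavy that `{i, n}` is long for every other `i`. Hence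
`{n}` is the only short set containing `n`, while every set omitting `n` and some other
element `j` is short, being contained in the short complement of `{j, n}`. So a vertex of `Γ(L)`
is `{n}` together with an ordered splitting of `[n-1]` into two nonempty parts, and there are
`2^{n-1} - 2` such splittings; its three representatives are told apart by the position of `{n}`.
-/

def rotTEquiv (n : ℕ) : LTriple n ≃ LTriple n where
  toFun := rotT
  invFun := rotT ∘ rotT
  left_inv _ := rfl
  right_inv _ := rfl

section Triples

variable {n : ℕ}

lemma IsVertex.rotT {L : Fin n → ℝ} {V : LTriple n} (hV : IsVertex L V) :
    IsVertex L (rotT V) := by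
  obtain ⟨h1, h2, h3, s1, s2, s3, d12, d13, d23, hu⟩ := hV
  refine ⟨h2, h3, h1, s2, s3, s1, d23, d12.symm, d13.symm, ?_⟩
  show V.2.1 ∪ V.2.2 ∪ V.1 = univ
  rw [union_comm, ← union_assoc, hu]

lemma isVertex_rotT_iff {L : Fin n → ℝ} {V : LTriple n} :
    IsVertex L (rotT V) ↔ IsVertex L V :=
  ⟨fun h => h.rotT.rotT, IsVertex.rotT⟩

lemma mem_vertexTriples {L : Fin n → ℝ} {V : LTriple n} :
    V ∈ vertexTriples L ↔ IsVertex L V := by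
  simp [vertexTriples]

lemma mem_vertexTriples_iff_rotT_mem {L : Fin n → ℝ} {V : LTriple n} :
    V ∈ vertexTriples L ↔ rotT V ∈ vertexTriples L := by
  rw [mem_vertexTriples, mem_vertexTriples, isVertex_rotT_iff]

lemma card_vertexTriples_eq_three_mul (L : Fin n → ℝ) (m : Fin n) :
    #(vertexTriples L) = 3 * #{V ∈ vertexTriples L | m ∈ V.1} := by
  have h2 : #{V ∈ vertexTriples L | m ∈ V.2.1} = #{V ∈ vertexTriples L | m ∈ V.1} :=
    card_equiv (rotTEquiv n) fun _ => by
      simp only [mem_filter]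
      exact and_congr mem_vertexTriples_iff_rotT_mem Iff.rfl
  have h3 : #{V ∈ vertexTriples L | m ∈ V.2.2} = #{V ∈ vertexTriples L | m ∈ V.2.1} :=
    card_equiv (rotTEquiv n) fun _ => by
      simp only [mem_filter]
      exact and_congr mem_vertexTriples_iff_rotT_mem Iff.rfl
  have hsplit : #(vertexTriples L) = #{V ∈ vertexTriples L | m ∈ V.1} +
      #{V ∈ vertexTriples L | m ∈ V.2.1} + #{V ∈ vertexTriples L | m ∈ V.2.2} := by
    rw [card_filter, card_filter, card_filter, ← sum_add_distrib, ← sum_add_distrib,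
      card_eq_sum_ones]
    refine sum_congr rfl fun V hV => ?_
    obtain ⟨-, -, -, -, -, -, d12, d13, d23, hu⟩ := mem_vertexTriples.1 hV
    have hm : m ∈ V.1 ∪ V.2.1 ∪ V.2.2 := hu ▸ mem_univ m
    simp only [mem_union] at hm
    split_ifs <;> simp_all [disjoint_left]
  omega

end Triples

section ShortSets

variable {n : ℕ} {L : Fin n → ℝ} {I J : Finset (Fin n)}

lemma longSet_iff_shortSet_compl : LongSet L I ↔ ShortSet L Iᶜ := by
  simp [LongSet, ShortSet]

lemma LongSet.not_shortSet (h : LongSet L I) : ¬ ShortSet L I :=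
  lt_asymm h

lemma ShortSet.mono_s8 (hJ : ShortSet L J) (hL : ∀ i, 0 ≤ L i) (hIJ : I ⊆ J) : ShortSet L I :=
  calc ∑ i ∈ I, L i ≤ ∑ i ∈ J, L i := sum_le_sum_of_subset_of_nonneg hIJ fun i _ _ => hL i
    _ < ∑ i ∈ Jᶜ, L i := hJ
    _ ≤ ∑ i ∈ Iᶜ, L i :=
      sum_le_sum_of_subset_of_nonneg (compl_subset_compl.2 hIJ) fun i _ _ => hL i

end ShortSets

section Bow

variable {n : ℕ} {L : Fin n → ℝ} {m : Fin n} {I : Finset (Fin n)}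

lemma eq_singleton_of_shortSet_of_mem (hL : ∀ i, 0 ≤ L i)
    (hbow : ∀ i ≠ m, LongSet L {i, m}) (hI : ShortSet L I) (hm : m ∈ I) : I = {m} := by
  refine eq_singleton_iff_unique_mem.2 ⟨hm, fun x hx => ?_⟩
  by_contra hxm
  exact (hbow x hxm).not_shortSet (hI.mono_s8 hL (insert_subset hx (singleton_subset_iff.2 hm)))

lemma shortSet_of_notMem (hL : ∀ i, 0 ≤ L i) (hbow : ∀ i ≠ m, LongSet L {i, m}) {j : Fin n}
    (hjm : j ≠ m) (hj : j ∉ I) (hm : m ∉ I) : ShortSet L I := by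
  refine (longSet_iff_shortSet_compl.1 (hbow j hjm)).mono_s8 hL fun x hx => ?_
  simp only [mem_compl, mem_insert, mem_singleton]
  rintro (rfl | rfl) <;> contradiction

lemma isVertex_of_mem_Ioo (hL : ∀ i, 0 ≤ L i) (hbow : ∀ i ≠ m, LongSet L {i, m})
    (hm : ShortSet L {m}) {A : Finset (Fin n)} (hA : A ∈ Ioo ∅ {m}ᶜ) :
    IsVertex L ({m}, A, {m}ᶜ \ A) := by
  obtain ⟨⟨k, hk⟩, hAm⟩ := (mem_Ioo.1 hA).imp_left empty_ssubset.1
  obtain ⟨j, hj⟩ := sdiff_nonempty.2 (not_subset_of_ssubset hAm)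
  have hmA : m ∉ A := fun h => by simpa using hAm.subset h
  have hjm : j ≠ m := by simpa using (mem_sdiff.1 hj).1
  have hkm : k ≠ m := by simpa using hAm.subset hk
  refine ⟨singleton_nonempty m, ⟨k, hk⟩, ⟨j, hj⟩, hm, shortSet_of_notMem hL hbow hjm
    (mem_sdiff.1 hj).2 hmA, shortSet_of_notMem hL hbow hkm (by simp [hk]) (by simp),
    disjoint_singleton_left.2 hmA, disjoint_singleton_left.2 (by simp), disjoint_sdiff, ?_⟩
  rw [union_assoc, union_sdiff_of_subset hAm.subset, union_compl]

lemma IsVertex.eq_of_mem_fst (hL : ∀ i, 0 ≤ L i) (hbow : ∀ i ≠ m, LongSet L {i, m})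
    {V : LTriple n} (hV : IsVertex L V) (hmV : m ∈ V.1) :
    V.2.1 ∈ Ioo ∅ {m}ᶜ ∧ ({m}, V.2.1, {m}ᶜ \ V.2.1) = V := by
  obtain ⟨-, ⟨j, hj⟩, ⟨k, hk⟩, s1, -, -, d12, d13, d23, hu⟩ := hV
  have e1 : V.1 = {m} := eq_singleton_of_shortSet_of_mem hL hbow s1 hmV
  rw [e1] at d12 d13 hu
  have hsub : V.2.1 ⊆ {m}ᶜ := fun x hx => by
    simpa using fun h : x = m => disjoint_left.1 d12 (mem_singleton.2 h) hx
  have e3 : {m}ᶜ \ V.2.1 = V.2.2 := by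
    ext x
    have hx : x ∈ {m} ∪ V.2.1 ∪ V.2.2 := hu ▸ mem_univ x
    simp only [mem_union, mem_singleton] at hx
    simp only [mem_sdiff, mem_compl, mem_singleton]
    constructor
    · rintro ⟨hxm, hx1⟩; tauto
    · intro hx2
      exact ⟨fun h => disjoint_right.1 d13 hx2 (mem_singleton.2 h),
        disjoint_right.1 d23 hx2⟩
  refine ⟨mem_Ioo.2 ⟨empty_ssubset.2 ⟨j, hj⟩, ssubset_of_subset_of_ne hsub ?_⟩, ?_⟩
  · rintro h
    rw [h, sdiff_self] at e3
    simp [← e3] at hk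
  · rw [e3, ← e1]

lemma card_filter_mem_fst_vertexTriples (hL : ∀ i, 0 ≤ L i)
    (hbow : ∀ i ≠ m, LongSet L {i, m}) (hm : ShortSet L {m}) :
    #{V ∈ vertexTriples L | m ∈ V.1} = 2 ^ (n - 1) - 2 := by
  have hslice : {V ∈ vertexTriples L | m ∈ V.1} =
      (Ioo ∅ {m}ᶜ).image fun A => ({m}, A, {m}ᶜ \ A) := by
    ext V
    rw [mem_filter, mem_vertexTriples, mem_image]
    constructor
    · rintro ⟨hV, hmV⟩
      exact ⟨V.2.1, hV.eq_of_mem_fst hL hbow hmV⟩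
    · rintro ⟨A, hA, rfl⟩
      exact ⟨isVertex_of_mem_Ioo hL hbow hm hA, mem_singleton_self m⟩
  rw [hslice, card_image_of_injective _ fun A B h => congrArg (·.2.1) h,
    card_Ioo_finset (empty_subset _), card_compl, card_singleton, card_empty, Fintype.card_fin,
    Nat.sub_zero]

end Bow

/-- If `L` is an `n`-bow, then the number of vertices of `Γ(L)` equals
`2^{n−1} − 2`; equivalently the number of ordered vertex triples is `3·(2^{n−1} − 2)`. -/
theorem bow_num_vertices (n : ℕ) (hn : 3 ≤ n) (L : Fin n → ℝ)
    (hpos : ∀ i, 0 < L i) (htri : TriangleIneq L)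
    (hbow : ∀ i : Fin n, i ≠ ⟨n - 1, by omega⟩ → LongSet L {i, ⟨n - 1, by omega⟩}) :
    (vertexTriples L).card = 3 * (2 ^ (n - 1) - 2) := by
  rw [card_vertexTriples_eq_three_mul L ⟨n - 1, by omega⟩,
    card_filter_mem_fst_vertexTriples (fun i => (hpos i).le) hbow (htri _)]
end
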